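/- Let p be an odd prime and n ≥ 1. The p-adic reflected Gray code is an involution: gc_n(gc_n(x)) = x for all x ∈ 𝔽_p^n, i.e. gc_n is its own inverse. -/
import Mathlib


/-- The vector `d = (-1,…,-1) ∈ 𝔽_p^n`. -/
def dVec (p n : ℕ) : Fin n → ZMod p := fun _ => -1

/-- The opposite point `x^⊥ = d - x`. -/
def perp (p n : ℕ) (x : Fin n → ZMod p) : Fin n → ZMod p := dVec p n - x

/-- The p-adic reflected Gray code `gc_n`, defined recursively: the top digit is kept,
and the lower digits are Gray-coded, reflected (`x' ↦ x'^⊥`) iff the top digit is odd. -/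
def grayCode (p : ℕ) : (n : ℕ) → (Fin n → ZMod p) → (Fin n → ZMod p)
  | 0, x => x
  | n + 1, x =>
    Fin.snoc
      (if (x (Fin.last n)).val % 2 = 0
        then grayCode p n (Fin.init x)
        else grayCode p n (perp p n (Fin.init x)))
      (x (Fin.last n))

lemma perp_apply (p n : ℕ) (x : Fin n → ZMod p) (i : Fin n) :
    perp p n x i = -1 - x i := rfl

lemma perp_perp (p n : ℕ) (x : Fin n → ZMod p) : perp p n (perp p n x) = x := by
  funext i; simp [perp_apply]

lemma init_perp (p n : ℕ) (x : Fin (n+1) → ZMod p) :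
    Fin.init (perp p (n+1) x) = perp p n (Fin.init x) := by
  funext i; simp [Fin.init, perp_apply]

lemma snoc_perp (p n : ℕ) (v : Fin n → ZMod p) (a : ZMod p) :
    perp p (n+1) (Fin.snoc v a) = Fin.snoc (perp p n v) (-1 - a) := by
  funext i
  refine Fin.lastCases ?_ (fun j => ?_) i <;> simp [perp_apply]

lemma val_neg_one_sub (p : ℕ) (hp : p.Prime) (a : ZMod p) :
    ((-1 - a : ZMod p)).val = p - 1 - a.val := by
  haveI : NeZero p := ⟨hp.ne_zero⟩
  have hlt : a.val < p := ZMod.val_lt a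
  have h1 : 1 ≤ p := hp.one_lt.le
  have : (-1 - a : ZMod p) = ((p - 1 - a.val : ℕ) : ZMod p) := by
    have : ((p - 1 - a.val : ℕ) : ZMod p) = (p : ZMod p) - 1 - (a.val : ZMod p) := by
      push_cast [Nat.cast_sub (by omega : a.val ≤ p - 1), Nat.cast_sub h1]
      ring
    rw [this, ZMod.natCast_self, ZMod.natCast_val, ZMod.cast_id]
    ring
  rw [this, ZMod.val_natCast_of_lt (by omega)]

lemma parity_neg_one_sub (p : ℕ) (hp : p.Prime) (hodd : Odd p) (a : ZMod p) :
    ((-1 - a : ZMod p)).val % 2 = a.val % 2 := by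
  haveI : NeZero p := ⟨hp.ne_zero⟩
  have hlt : a.val < p := ZMod.val_lt a
  rw [val_neg_one_sub p hp]
  obtain ⟨k, hk⟩ := hodd
  omega

lemma grayCode_perp (p : ℕ) (hp : p.Prime) (hodd : Odd p) :
    ∀ n (x : Fin n → ZMod p),
      grayCode p n (perp p n x) = perp p n (grayCode p n x) := by
  intro n
  induction n with
  | zero => intro x; funext i; exact absurd i.2 (by omega)
  | succ n ih =>
    intro x
    show Fin.snoc _ (perp p (n+1) x (Fin.last n)) = perp p (n+1) (Fin.snoc _ _)
    rw [perp_apply, snoc_perp, init_perp, parity_neg_one_sub p hp hodd]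
    by_cases h : (x (Fin.last n)).val % 2 = 0
    · simp only [h, if_pos, if_true, ih]
    · simp only [h, if_neg, if_false, ite_false, perp_perp, ih, perp_perp]

/-- the p-adic reflected Gray code is an involution:
`gc_n(gc_n(x)) = x`. -/
theorem grayCode_involution (p n : ℕ) (hp : p.Prime) (hodd : Odd p) (hn : 1 ≤ n) :
    ∀ x : Fin n → ZMod p, grayCode p n (grayCode p n x) = x := by
  clear hn
  induction n with
  | zero => intro x; funext i; exact absurd i.2 (by omega)
  | succ n ih =>
    intro x
    have hlast : grayCode p (n+1) x (Fin.last n) = x (Fin.last n) := by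
      show Fin.snoc _ _ (Fin.last n) = _
      rw [Fin.snoc_last]
    have hinit : Fin.init (grayCode p (n+1) x) =
        (if (x (Fin.last n)).val % 2 = 0
          then grayCode p n (Fin.init x)
          else grayCode p n (perp p n (Fin.init x))) := by
      show Fin.init (Fin.snoc _ _) = _
      rw [Fin.init_snoc]
    show Fin.snoc _ (grayCode p (n+1) x (Fin.last n)) = x
    rw [hlast, hinit]
    by_cases h : (x (Fin.last n)).val % 2 = 0
    · simp only [h, if_true, ite_true, ih]
      exact Fin.snoc_init_self x
    · simp only [h, if_false, ite_false]
      rw [grayCode_perp p hp hodd, ih, perp_perp]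
      exact Fin.snoc_init_self x
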